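/- Let a ≤ 0 ≤ b with b − a ≥ 1 and −ab ≤ 1, and let x be irrational with (a,b)-continued fraction digits (n_i) and convergents r_k = p_k/q_k defined by the minus continued fraction recurrences. Then r_k → x as k → ∞. -/

import Mathlib

open Filter Topology

/-- The generalized integer part `⌊x⌉_{a,b}`. -/
noncomputable def gfloor (a b x : ℝ) : ℤ :=
  if x < a then ⌊x - a⌋ else if x < b then 0 else ⌊x - b⌋ + 1

/-- The sequence `x₀ = x`, `x_{i+1} = -1/(x_i - ⌊x_i⌉_{a,b})`. -/
noncomputable def xseq (a b x : ℝ) : ℕ → ℝ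
  | 0 => x
  | i + 1 => -1 / (xseq a b x i - (gfloor a b (xseq a b x i) : ℝ))

/-- The digits `n_i = ⌊x_i⌉_{a,b}` of the (a,b)-continued fraction of `x`. -/
noncomputable def dig (a b x : ℝ) (i : ℕ) : ℤ := gfloor a b (xseq a b x i)

/-- Numerators: `pfun n (k+2) = p_k`, `p_{-2}=0`, `p_{-1}=1`, `p_k = n_k p_{k-1} - p_{k-2}`. -/
noncomputable def pfun (n : ℕ → ℤ) : ℕ → ℤ
  | 0 => 0
  | 1 => 1
  | k + 2 => n k * pfun n (k + 1) - pfun n k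

/-- Denominators: `qfun n (k+2) = q_k`, `q_{-2}=-1`, `q_{-1}=0`, `q_k = n_k q_{k-1} - q_{k-2}`. -/
noncomputable def qfun (n : ℕ → ℤ) : ℕ → ℤ
  | 0 => -1
  | 1 => 0
  | k + 2 => n k * qfun n (k + 1) - qfun n k

/-! The error `E_k = q_k x - p_k` satisfies `E_k = -t_k E_{k-1}`, where `t_k = x_k - n_k ∈ [a, b)`,
and `E_k q_{k-1} - E_{k-1} q_k = 1`. The conditions on `a, b` make the sign of `n_{k+1}` opposite to
that of `t_k`, and allow a digit `±1` only after a digit of the opposite sign; hence `|q_k|` is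
nondecreasing and `q_{k+1} q_k` has the sign of `n_{k+1}`. Where `t` changes sign, the determinant
identity gives `|E_k| ≤ 1`; elsewhere `|t_{k+1}| ≤ 1`; so `|E_k| ≤ b - a` for all `k`, and
`|x - p_k / q_k| = |E_k| / |q_k|`. Finally `|q_k| → ∞`: if `|q_k|` were eventually constant, the
recurrence would force all later digits to equal one `d = ±2`, and then `2 / (2 + d t_k)` would drop
by `1` at each step while staying positive. -/

section GFloor

variable {a b y : ℝ}

lemma sub_gfloor_mem (hab : 1 ≤ b - a) (y : ℝ) :
    a ≤ y - gfloor a b y ∧ y - gfloor a b y < b := by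
  unfold gfloor
  split_ifs with hya hyb
  · have := Int.floor_le (y - a); have := Int.lt_floor_add_one (y - a)
    constructor <;> linarith
  · simp only [Int.cast_zero, sub_zero]; exact ⟨not_lt.1 hya, hyb⟩
  · have := Int.floor_le (y - b); have := Int.lt_floor_add_one (y - b)
    push_cast
    constructor <;> linarith

lemma lt_gfloor_of_add_le (hab : a ≤ b) {m : ℤ} (hm : 0 ≤ m) (h : b + m ≤ y) :
    m < gfloor a b y := by
  have hm' : (0 : ℝ) ≤ m := by exact_mod_cast hm
  have : m ≤ ⌊y - b⌋ := Int.le_floor.2 (by linarith)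
  rw [gfloor, if_neg (by linarith), if_neg (by linarith)]
  omega

lemma gfloor_lt_of_lt_add {m : ℤ} (hm : m ≤ 0) (h : y < a + m) : gfloor a b y < m := by
  have hm' : (m : ℝ) ≤ 0 := by exact_mod_cast hm
  rw [gfloor, if_pos (by linarith)]
  exact Int.floor_lt.2 (by linarith)

lemma sub_one_le_sub_gfloor (h : 0 < gfloor a b y) : b - 1 ≤ y - gfloor a b y := by
  unfold gfloor at *
  split_ifs at * with hya hyb
  · exact absurd h (not_lt.2 (Int.floor_nonpos (by linarith)))
  · exact absurd h (lt_irrefl 0)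
  · have := Int.floor_le (y - b)
    push_cast
    linarith

lemma sub_gfloor_lt_add_one (h : gfloor a b y < 0) : y - gfloor a b y < a + 1 := by
  unfold gfloor at *
  split_ifs at * with hya hyb
  · linarith [Int.lt_floor_add_one (y - a)]
  · exact absurd h (lt_irrefl 0)
  · have : 0 ≤ ⌊y - b⌋ := Int.floor_nonneg.2 (by linarith)
    omega

end GFloor

lemma pfun_add_two (n : ℕ → ℤ) (k : ℕ) : pfun n (k + 2) = n k * pfun n (k + 1) - pfun n k := rfl

lemma qfun_add_two (n : ℕ → ℤ) (k : ℕ) : qfun n (k + 2) = n k * qfun n (k + 1) - qfun n k := rfl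

lemma pfun_mul_qfun_sub_pfun_mul_qfun (n : ℕ → ℤ) (k : ℕ) :
    pfun n (k + 1) * qfun n (k + 2) - pfun n (k + 2) * qfun n (k + 1) = 1 := by
  induction k with
  | zero => simp [pfun, qfun]
  | succ k ih =>
    rw [pfun_add_two n (k + 1), qfun_add_two n (k + 1)]
    linear_combination ih

structure AdmissibleDigits (n : ℕ → ℤ) : Prop where
  ne_zero : ∀ k, n (k + 1) ≠ 0
  neg_of_eq_one : ∀ k, n (k + 2) = 1 → n (k + 1) < 0
  pos_of_eq_neg_one : ∀ k, n (k + 2) = -1 → 0 < n (k + 1)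

lemma sq_le_mul_mul_sub_and_abs_le {m A B : ℤ} (hm : m ≠ 0) (hB : B ≠ 0) (hAB : |A| ≤ |B|)
    (hone : m = 1 → A * B < 0) (hneg_one : m = -1 → 0 < A * B) :
    B ^ 2 ≤ m * ((m * B - A) * B) ∧ |B| ≤ |m * B - A| := by
  have hAB' := abs_le.1 (show |A * B| ≤ B ^ 2 by
    rw [abs_mul, ← sq_abs B]; nlinarith [abs_nonneg A])
  have of_sq_le : B ^ 2 ≤ |(m * B - A) * B| → |B| ≤ |m * B - A| := fun h =>
    le_of_mul_le_mul_right (by rwa [abs_mul_abs_self, ← abs_mul, ← sq]) (abs_pos.2 hB)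
  have of_two_le : 2 ≤ |m| → |B| ≤ |m * B - A| := fun h => by
    have := abs_sub_abs_le_abs_sub (m * B) A
    rw [abs_mul] at this
    nlinarith [mul_le_mul_of_nonneg_right h (abs_nonneg B)]
  rcases lt_or_gt_of_ne hm with hm | hm
  · rcases (show m = -1 ∨ m ≤ -2 by omega) with h | h
    · have h1 : B ^ 2 ≤ m * ((m * B - A) * B) := by rw [h]; nlinarith [hneg_one h]
      exact ⟨h1, of_sq_le (by nlinarith [neg_abs_le ((m * B - A) * B)])⟩
    · have : 0 ≤ (m + 2) * (m - 1) * B ^ 2 :=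
        mul_nonneg (mul_nonneg_of_nonpos_of_nonpos (by omega) (by omega)) (sq_nonneg B)
      exact ⟨by nlinarith [mul_le_mul_of_nonneg_left hAB'.1 (neg_nonneg.2 hm.le)],
        of_two_le (by rw [abs_of_neg hm]; omega)⟩
  · rcases (show m = 1 ∨ 2 ≤ m by omega) with h | h
    · have h1 : B ^ 2 ≤ m * ((m * B - A) * B) := by rw [h]; nlinarith [hone h]
      exact ⟨h1, of_sq_le (by nlinarith [le_abs_self ((m * B - A) * B)])⟩
    · have : 0 ≤ (m - 2) * (m + 1) * B ^ 2 :=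
        mul_nonneg (mul_nonneg (by omega) (by omega)) (sq_nonneg B)
      exact ⟨by nlinarith [mul_le_mul_of_nonneg_left hAB'.2 hm.le],
        of_two_le (by rw [abs_of_pos hm]; omega)⟩

namespace AdmissibleDigits

variable {n : ℕ → ℤ}

lemma qfun_invariant (hn : AdmissibleDigits n) (k : ℕ) :
    1 ≤ |qfun n (k + 2)| ∧ |qfun n (k + 2)| ≤ |qfun n (k + 3)| ∧
      0 < n (k + 1) * (qfun n (k + 3) * qfun n (k + 2)) := by
  induction k with
  | zero =>
    have h2 : qfun n 2 = 1 := by simp [qfun]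
    have h3 : qfun n 3 = n 1 := by simp [qfun]
    have h1 : n 1 ≠ 0 := hn.ne_zero 0
    rw [h2, h3]
    exact ⟨abs_one.ge, by simpa using Int.one_le_abs h1, by simpa [mul_self_pos]⟩
  | succ k ih =>
    obtain ⟨hA, hAB, hsign⟩ := ih
    have hB : 1 ≤ |qfun n (k + 3)| := hA.trans hAB
    rw [show k + 1 + 3 = k + 2 + 2 from rfl, qfun_add_two n (k + 2)]
    obtain ⟨hsq, habs⟩ := sq_le_mul_mul_sub_and_abs_le (hn.ne_zero (k + 1))
      (abs_pos.1 (one_pos.trans_le hB)) hAB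
      (fun h => by nlinarith [hn.neg_of_eq_one k h])
      (fun h => by nlinarith [hn.pos_of_eq_neg_one k h])
    exact ⟨hB, habs, by nlinarith [sq_abs (qfun n (k + 3))]⟩

lemma one_le_abs_qfun (hn : AdmissibleDigits n) (k : ℕ) : 1 ≤ |qfun n (k + 2)| :=
  (hn.qfun_invariant k).1

lemma qfun_ne_zero (hn : AdmissibleDigits n) (k : ℕ) : qfun n (k + 2) ≠ 0 :=
  abs_pos.1 (one_pos.trans_le (hn.one_le_abs_qfun k))

lemma abs_qfun_mono (hn : AdmissibleDigits n) : Monotone fun k => |qfun n (k + 2)| :=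
  monotone_nat_of_le_succ fun k => (hn.qfun_invariant k).2.1

lemma mul_qfun_mul_pos (hn : AdmissibleDigits n) (k : ℕ) :
    0 < n (k + 1) * (qfun n (k + 3) * qfun n (k + 2)) :=
  (hn.qfun_invariant k).2.2

end AdmissibleDigits

lemma mul_sq_eq_two_mul_of_sq_eq {m A B : ℤ} (hm : m ≠ 0) (hA : A ^ 2 = B ^ 2)
    (hC : (m * B - A) ^ 2 = B ^ 2) : m * B ^ 2 = 2 * (A * B) := by
  have : m * (m * B ^ 2 - 2 * (A * B)) = 0 := by linear_combination hC - hA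
  linarith [(mul_eq_zero.1 this).resolve_left hm]

lemma exists_eventually_eq_of_abs_qfun_eq {n : ℕ → ℤ} (hn : ∀ k, n (k + 1) ≠ 0) {K : ℕ}
    (hK : qfun n (K + 2) ≠ 0) (h : ∀ k ≥ K, |qfun n (k + 2)| = |qfun n (K + 2)|) :
    ∃ d, |d| = 2 ∧ ∀ k ≥ K, n (k + 2) = d := by
  set c := qfun n (K + 2)
  have hsq : ∀ k ≥ K, qfun n (k + 2) ^ 2 = c ^ 2 := fun k hk => by
    rw [← sq_abs, h k hk, sq_abs]
  have hdig : ∀ k ≥ K, n (k + 2) * c ^ 2 = 2 * (qfun n (k + 2) * qfun n (k + 3)) := by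
    intro k hk
    have := mul_sq_eq_two_mul_of_sq_eq (hn (k + 1))
      ((hsq k hk).trans (hsq (k + 1) (by omega)).symm)
      ((hsq (k + 2) (by omega)).trans (hsq (k + 1) (by omega)).symm)
    rwa [← hsq (k + 1) (by omega)]
  have hprod : ∀ k ≥ K, qfun n (k + 2) * qfun n (k + 3) = c * qfun n (K + 3) := by
    intro k hk
    induction k, hk using Nat.le_induction with
    | base => rfl
    | succ k hk ih =>
      rw [← ih, qfun_add_two n (k + 2)]
      have := hdig k hk
      rw [← hsq (k + 1) (by omega)] at this
      linear_combination this
  refine ⟨n (K + 2), ?_, fun k hk => ?_⟩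
  · have := congrArg abs (hdig K le_rfl)
    rw [abs_mul, abs_mul, abs_mul, abs_pow, h (K + 1) (by omega), abs_two, ← sq] at this
    exact mul_right_cancel₀ (pow_ne_zero 2 (abs_ne_zero.2 hK)) this
  · have h1 := hdig k hk
    rw [hprod k hk, ← hdig K le_rfl] at h1
    exact mul_right_cancel₀ (pow_ne_zero 2 hK) h1

-- `tseq a b x k = t_k` and `errSeq a b x (k + 2) = E_k`, with the index shift of `pfun` and `qfun`.
noncomputable def tseq (a b x : ℝ) (i : ℕ) : ℝ := xseq a b x i - dig a b x i

noncomputable def errSeq (a b x : ℝ) (k : ℕ) : ℝ := qfun (dig a b x) k * x - pfun (dig a b x) k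

section Expansion

variable {a b x : ℝ}

lemma xseq_succ (i : ℕ) : xseq a b x (i + 1) = -1 / tseq a b x i := rfl

lemma tseq_succ (i : ℕ) : tseq a b x (i + 1) = -1 / tseq a b x i - dig a b x (i + 1) := rfl

lemma tseq_mem (hab : 1 ≤ b - a) (i : ℕ) : a ≤ tseq a b x i ∧ tseq a b x i < b :=
  sub_gfloor_mem hab _

lemma abs_tseq_le (ha : a ≤ 0) (hb : 0 ≤ b) (hab : 1 ≤ b - a) (i : ℕ) :
    |tseq a b x i| ≤ b - a := by
  have := tseq_mem (x := x) hab i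
  exact abs_le.2 ⟨by linarith, by linarith⟩

lemma irrational_xseq (hx : Irrational x) (i : ℕ) : Irrational (xseq a b x i) := by
  induction i with
  | zero => exact hx
  | succ i ih =>
    rw [xseq_succ, neg_div, one_div]
    exact (ih.sub_intCast _).inv.neg

lemma irrational_tseq (hx : Irrational x) (i : ℕ) : Irrational (tseq a b x i) :=
  (irrational_xseq hx i).sub_intCast _

lemma tseq_ne_zero (hx : Irrational x) (i : ℕ) : tseq a b x i ≠ 0 :=
  (irrational_tseq hx i).ne_zero

lemma dig_succ_pos_of_tseq_neg (hb : 0 ≤ b) (hab : 1 ≤ b - a) (hprod : -(a * b) ≤ 1) {i : ℕ}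
    (h : tseq a b x i < 0) : 0 < dig a b x (i + 1) := by
  have hat := (tseq_mem (x := x) hab i).1
  have hbx : b ≤ xseq a b x (i + 1) := by
    rw [xseq_succ, le_div_iff_of_neg h]
    nlinarith
  exact lt_gfloor_of_add_le (by linarith) le_rfl (by simpa using hbx)

lemma dig_succ_neg_of_tseq_pos (hab : 1 ≤ b - a) (hprod : -(a * b) ≤ 1) {i : ℕ}
    (h : 0 < tseq a b x i) : dig a b x (i + 1) < 0 := by
  have htb := (tseq_mem (x := x) hab i).2
  have hxa : xseq a b x (i + 1) < a := by
    rw [xseq_succ, div_lt_iff₀ h]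
    nlinarith
  exact gfloor_lt_of_lt_add le_rfl (by simpa using hxa)

lemma dig_succ_pos_iff (hb : 0 ≤ b) (hab : 1 ≤ b - a) (hprod : -(a * b) ≤ 1) (hx : Irrational x)
    (i : ℕ) : 0 < dig a b x (i + 1) ↔ tseq a b x i < 0 := by
  refine ⟨fun h => ?_, dig_succ_pos_of_tseq_neg hb hab hprod⟩
  refine (tseq_ne_zero hx i).lt_or_gt.resolve_right fun ht => ?_
  exact (dig_succ_neg_of_tseq_pos hab hprod ht).not_gt h

lemma dig_succ_neg_iff (hb : 0 ≤ b) (hab : 1 ≤ b - a) (hprod : -(a * b) ≤ 1) (hx : Irrational x)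
    (i : ℕ) : dig a b x (i + 1) < 0 ↔ 0 < tseq a b x i := by
  refine ⟨fun h => ?_, dig_succ_neg_of_tseq_pos hab hprod⟩
  refine (tseq_ne_zero hx i).lt_or_gt.resolve_left fun ht => ?_
  exact (dig_succ_pos_of_tseq_neg hb hab hprod ht).not_gt h

lemma one_lt_dig_of_pos_of_pos (hb : 0 ≤ b) (hab : 1 ≤ b - a) (hprod : -(a * b) ≤ 1)
    (hx : Irrational x) {i : ℕ} (h1 : 0 < dig a b x (i + 1)) (h2 : 0 < dig a b x (i + 2)) :
    1 < dig a b x (i + 2) := by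
  have hlo : b - 1 ≤ tseq a b x (i + 1) := sub_one_le_sub_gfloor h1
  have hneg : tseq a b x (i + 1) < 0 := (dig_succ_pos_iff hb hab hprod hx (i + 1)).1 h2
  have hbx : b + 1 ≤ xseq a b x (i + 2) := by
    rw [xseq_succ, le_div_iff_of_neg hneg]
    nlinarith
  exact lt_gfloor_of_add_le (by linarith) zero_le_one (by simpa using hbx)

lemma dig_lt_neg_one_of_neg_of_neg (ha : a ≤ 0) (hb : 0 ≤ b) (hab : 1 ≤ b - a)
    (hprod : -(a * b) ≤ 1) (hx : Irrational x) {i : ℕ} (h1 : dig a b x (i + 1) < 0)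
    (h2 : dig a b x (i + 2) < 0) : dig a b x (i + 2) < -1 := by
  have hhi : tseq a b x (i + 1) < a + 1 := sub_gfloor_lt_add_one h1
  have hpos : 0 < tseq a b x (i + 1) := (dig_succ_neg_iff hb hab hprod hx (i + 1)).1 h2
  have hxa : xseq a b x (i + 2) < a - 1 := by
    rw [xseq_succ, div_lt_iff₀ hpos]
    nlinarith
  exact gfloor_lt_of_lt_add (by norm_num) (by push_cast; linarith)

lemma dig_succ_ne_zero (hb : 0 ≤ b) (hab : 1 ≤ b - a) (hprod : -(a * b) ≤ 1) (hx : Irrational x)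
    (i : ℕ) : dig a b x (i + 1) ≠ 0 := by
  rcases (tseq_ne_zero hx i).lt_or_gt with h | h
  · exact (dig_succ_pos_of_tseq_neg hb hab hprod h).ne'
  · exact (dig_succ_neg_of_tseq_pos hab hprod h).ne

lemma dig_admissible (ha : a ≤ 0) (hb : 0 ≤ b) (hab : 1 ≤ b - a) (hprod : -(a * b) ≤ 1)
    (hx : Irrational x) : AdmissibleDigits (dig a b x) where
  ne_zero := dig_succ_ne_zero hb hab hprod hx
  neg_of_eq_one k h := (dig_succ_ne_zero hb hab hprod hx k).lt_or_gt.resolve_right fun h1 =>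
    (one_lt_dig_of_pos_of_pos hb hab hprod hx h1 (by omega)).ne' h
  pos_of_eq_neg_one k h := (dig_succ_ne_zero hb hab hprod hx k).lt_or_gt.resolve_left fun h1 =>
    (dig_lt_neg_one_of_neg_of_neg ha hb hab hprod hx h1 (by omega)).ne h

end Expansion

section Error

variable {a b x : ℝ}

lemma errSeq_succ_succ (hx : Irrational x) (k : ℕ) :
    errSeq a b x (k + 2) = -tseq a b x k * errSeq a b x (k + 1) := by
  induction k with
  | zero =>
    simp [errSeq, pfun, qfun, tseq, dig, xseq]
  | succ k ih =>
    have hk := tseq_ne_zero (a := a) (b := b) hx k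
    have hrec : errSeq a b x (k + 3) =
        dig a b x (k + 1) * errSeq a b x (k + 2) - errSeq a b x (k + 1) := by
      simp only [errSeq, pfun_add_two _ (k + 1), qfun_add_two _ (k + 1)]
      push_cast; ring
    rw [hrec, tseq_succ, show k + 1 + 1 = k + 2 from rfl, ih]
    field_simp
    ring

lemma errSeq_mul_qfun_sub (k : ℕ) :
    errSeq a b x (k + 2) * qfun (dig a b x) (k + 1) -
      errSeq a b x (k + 1) * qfun (dig a b x) (k + 2) = 1 := by
  have := congrArg (Int.cast : ℤ → ℝ) (pfun_mul_qfun_sub_pfun_mul_qfun (dig a b x) k)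
  push_cast at this
  simp only [errSeq]
  linear_combination this

end Error

section Bound

variable {a b x : ℝ}

lemma tseq_mul_qfun_mul_neg (ha : a ≤ 0) (hb : 0 ≤ b) (hab : 1 ≤ b - a) (hprod : -(a * b) ≤ 1)
    (hx : Irrational x) (k : ℕ) :
    tseq a b x k * ((qfun (dig a b x) (k + 3) : ℝ) * qfun (dig a b x) (k + 2)) < 0 := by
  have hpos := (dig_admissible ha hb hab hprod hx).mul_qfun_mul_pos k
  rcases (tseq_ne_zero hx k).lt_or_gt with ht | ht
  · have hn := dig_succ_pos_of_tseq_neg hb hab hprod ht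
    have hQ : (0 : ℝ) < qfun (dig a b x) (k + 3) * qfun (dig a b x) (k + 2) := by
      exact_mod_cast pos_of_mul_pos_right hpos hn.le
    exact mul_neg_of_neg_of_pos ht hQ
  · have hn := dig_succ_neg_of_tseq_pos hab hprod ht
    have hQ : (qfun (dig a b x) (k + 3) : ℝ) * qfun (dig a b x) (k + 2) < 0 := by
      exact_mod_cast (pos_and_pos_or_neg_and_neg_of_mul_pos hpos).resolve_left
        (fun h => hn.not_gt h.1) |>.2
    exact mul_neg_of_pos_of_neg ht hQ

lemma abs_errSeq_mul_abs_qfun_add (hx : Irrational x) (k : ℕ) :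
    |errSeq a b x (k + 2)| *
      |(qfun (dig a b x) (k + 3) : ℝ) + tseq a b x (k + 1) * qfun (dig a b x) (k + 2)| = 1 := by
  have hdet := errSeq_mul_qfun_sub (a := a) (b := b) (x := x) (k + 1)
  rw [errSeq_succ_succ hx (k + 1)] at hdet
  rw [← abs_mul, ← abs_neg, ← abs_one]
  congr 1
  linear_combination hdet

lemma abs_errSeq_le_one (ha : a ≤ 0) (hb : 0 ≤ b) (hab : 1 ≤ b - a) (hprod : -(a * b) ≤ 1)
    (hx : Irrational x) {k : ℕ} (h : tseq a b x k * tseq a b x (k + 1) < 0) :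
    |errSeq a b x (k + 2)| ≤ 1 := by
  obtain ⟨Q₂, eQ₂⟩ : ∃ Q : ℝ, Q = qfun (dig a b x) (k + 2) := ⟨_, rfl⟩
  obtain ⟨Q₃, eQ₃⟩ : ∃ Q : ℝ, Q = qfun (dig a b x) (k + 3) := ⟨_, rfl⟩
  have hsign : 0 < tseq a b x (k + 1) * (Q₃ * Q₂) := by
    have := mul_pos_of_neg_of_neg (tseq_mul_qfun_mul_neg ha hb hab hprod hx k) h
    rw [← eQ₂, ← eQ₃] at this
    exact pos_of_mul_pos_right (a := tseq a b x k ^ 2) (by convert this using 1; ring) (sq_nonneg _)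
  have hQ₃ : 1 ≤ Q₃ ^ 2 := by
    have := (dig_admissible ha hb hab hprod hx).one_le_abs_qfun (k + 1)
    rw [one_le_sq_iff_one_le_abs, eQ₃, ← Int.cast_abs]
    exact_mod_cast this
  have hD : 1 ≤ |Q₃ + tseq a b x (k + 1) * Q₂| := by
    rw [← one_le_sq_iff_one_le_abs]
    nlinarith [sq_nonneg (tseq a b x (k + 1) * Q₂)]
  have := abs_errSeq_mul_abs_qfun_add (a := a) (b := b) hx k
  rw [← eQ₂, ← eQ₃] at this
  nlinarith [abs_nonneg (errSeq a b x (k + 2))]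

lemma abs_tseq_succ_le_one (ha : a ≤ 0) (hb : 0 ≤ b) (hab : 1 ≤ b - a) (hprod : -(a * b) ≤ 1)
    {k : ℕ} (h : 0 < tseq a b x k * tseq a b x (k + 1)) : |tseq a b x (k + 1)| ≤ 1 := by
  rcases pos_and_pos_or_neg_and_neg_of_mul_pos h with ⟨hk, hk1⟩ | ⟨hk, hk1⟩
  · have : tseq a b x (k + 1) < a + 1 :=
      sub_gfloor_lt_add_one (dig_succ_neg_of_tseq_pos hab hprod hk)
    rw [abs_of_pos hk1]; linarith
  · have : b - 1 ≤ tseq a b x (k + 1) :=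
      sub_one_le_sub_gfloor (dig_succ_pos_of_tseq_neg hb hab hprod hk)
    rw [abs_of_neg hk1]; linarith

lemma abs_errSeq_le (ha : a ≤ 0) (hb : 0 ≤ b) (hab : 1 ≤ b - a) (hprod : -(a * b) ≤ 1)
    (hx : Irrational x) (k : ℕ) : |errSeq a b x (k + 2)| ≤ b - a := by
  induction k with
  | zero =>
    have h1 : errSeq a b x 1 = -1 := by simp [errSeq, pfun, qfun]
    rw [errSeq_succ_succ hx, h1, mul_neg_one, neg_neg]
    exact abs_tseq_le ha hb hab 0
  | succ k ih =>
    rw [errSeq_succ_succ hx, abs_mul, abs_neg]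
    rcases (mul_ne_zero (tseq_ne_zero hx k) (tseq_ne_zero hx (k + 1))).lt_or_gt with h | h
    · exact (mul_le_of_le_one_right (abs_nonneg _) (abs_errSeq_le_one ha hb hab hprod hx h)).trans
        (abs_tseq_le ha hb hab _)
    · exact (mul_le_of_le_one_left (abs_nonneg _) (abs_tseq_succ_le_one ha hb hab hprod h)).trans ih

end Bound

lemma two_div_two_add_mul_neg_inv_sub {d t : ℝ} (hd : d ^ 2 = 4) (ht : t ≠ 0)
    (h : 2 + d * t ≠ 0) : 2 / (2 + d * (-1 / t - d)) = 2 / (2 + d * t) - 1 := by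
  have hd0 : d ≠ 0 := by rintro rfl; norm_num at hd
  have key : 2 + d * (-1 / t - d) = -(d * (2 + d * t)) / (2 * t) := by
    field_simp
    linear_combination -t * hd
  rw [key]
  field_simp
  linear_combination t * hd

section Dynamics

variable {a b x : ℝ}

lemma two_add_mul_tseq_pos (ha : a ≤ 0) (hb : 0 ≤ b) (hx : Irrational x) {d : ℤ} (hd : |d| = 2)
    {i : ℕ} (h : dig a b x i = d) : 0 < 2 + d * tseq a b x i := by
  rcases (abs_eq zero_le_two).1 hd with rfl | rfl
  · have hlo : b - 1 ≤ tseq a b x i :=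
      sub_one_le_sub_gfloor (a := a) (show 0 < dig a b x i by omega)
    have hne : tseq a b x i ≠ -1 := by exact_mod_cast (irrational_tseq hx i).ne_int (-1)
    have : -1 < tseq a b x i := lt_of_le_of_ne (by linarith) hne.symm
    push_cast
    linarith
  · have : tseq a b x i < a + 1 := sub_gfloor_lt_add_one (b := b) (show dig a b x i < 0 by omega)
    push_cast
    linarith

lemma not_forall_ge_dig_eq (ha : a ≤ 0) (hb : 0 ≤ b) (hx : Irrational x) {d : ℤ} (hd : |d| = 2)
    (K : ℕ) : ¬ ∀ i ≥ K, dig a b x i = d := by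
  intro h
  have hpos : ∀ i ≥ K, 0 < 2 + d * tseq a b x i :=
    fun i hi => two_add_mul_tseq_pos ha hb hx hd (h i hi)
  have hd2 : (d : ℝ) ^ 2 = 4 := by rw [← sq_abs, ← Int.cast_abs, hd]; norm_num
  have hdrop : ∀ m : ℕ, 2 / (2 + d * tseq a b x (K + m)) = 2 / (2 + d * tseq a b x K) - m := by
    intro m
    induction m with
    | zero => simp
    | succ m ih =>
      rw [← add_assoc, tseq_succ, h _ (by omega), two_div_two_add_mul_neg_inv_sub hd2
        (tseq_ne_zero hx _) (hpos _ (by omega)).ne', ih]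
      push_cast; ring
  obtain ⟨m, hm⟩ := exists_nat_gt (2 / (2 + d * tseq a b x K))
  have := div_pos two_pos (hpos (K + m) (by omega))
  linarith [hdrop m]

lemma tendsto_abs_qfun (ha : a ≤ 0) (hb : 0 ≤ b) (hab : 1 ≤ b - a) (hprod : -(a * b) ≤ 1)
    (hx : Irrational x) : Tendsto (fun k => |qfun (dig a b x) (k + 2)|) atTop atTop := by
  have hn := dig_admissible ha hb hab hprod hx
  refine tendsto_atTop_atTop_of_monotone' hn.abs_qfun_mono fun ⟨M, hM⟩ => ?_
  obtain ⟨_, ⟨K, rfl⟩, hK⟩ := Int.exists_greatest_of_bdd ⟨M, fun _ hz => hM hz⟩ ⟨_, 0, rfl⟩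
  have hconst : ∀ k ≥ K, |qfun (dig a b x) (k + 2)| = |qfun (dig a b x) (K + 2)| :=
    fun k hk => le_antisymm (hK _ ⟨k, rfl⟩) (hn.abs_qfun_mono hk)
  obtain ⟨d, hd, hdig⟩ := exists_eventually_eq_of_abs_qfun_eq hn.ne_zero (hn.qfun_ne_zero K) hconst
  refine not_forall_ge_dig_eq ha hb hx hd (K + 2) fun i hi => ?_
  obtain ⟨k, rfl⟩ := Nat.exists_eq_add_of_le' hi
  exact hdig (k + K) (by omega)

end Dynamics

theorem convergents_tendsto (a b x : ℝ) (ha : a ≤ 0) (hb : 0 ≤ b)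
    (hab : 1 ≤ b - a) (hprod : -(a * b) ≤ 1) (hx : Irrational x) :
    Tendsto (fun k : ℕ =>
        (pfun (dig a b x) (k + 2) : ℝ) / (qfun (dig a b x) (k + 2) : ℝ))
      atTop (𝓝 x) := by
  have hq : Tendsto (fun k => |(qfun (dig a b x) (k + 2) : ℝ)|) atTop atTop := by
    simpa only [Int.cast_abs] using
      (tendsto_intCast_atTop_iff (R := ℝ)).2 (tendsto_abs_qfun ha hb hab hprod hx)
  have hdist : ∀ k, dist ((pfun (dig a b x) (k + 2) : ℝ) / qfun (dig a b x) (k + 2)) x ≤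
      (b - a) / |(qfun (dig a b x) (k + 2) : ℝ)| := by
    intro k
    have hQ : (qfun (dig a b x) (k + 2) : ℝ) ≠ 0 := by
      exact_mod_cast (dig_admissible ha hb hab hprod hx).qfun_ne_zero k
    have herr : (pfun (dig a b x) (k + 2) : ℝ) / qfun (dig a b x) (k + 2) - x =
        -errSeq a b x (k + 2) / qfun (dig a b x) (k + 2) := by
      rw [errSeq]; field_simp; ring
    rw [Real.dist_eq, herr, abs_div, abs_neg]
    exact div_le_div_of_nonneg_right (abs_errSeq_le ha hb hab hprod hx k) (abs_nonneg _)
  exact tendsto_iff_dist_tendsto_zero.2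
    (squeeze_zero (fun _ => dist_nonneg) hdist (tendsto_const_nhds.div_atTop hq))
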